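/- The Cantor ternary set is the unique nonempty compact subset K of ℝ satisfying K = ω_0(K) ∪ ω_1(K), where ω_0(x) = x/3 and ω_1(x) = x/3 + 2/3. -/
import Mathlib

lemma preCantorSet_subset_unit (n : ℕ) : preCantorSet n ⊆ Set.Icc 0 1 := by
  induction n with
  | zero => simp
  | succ n ih =>
    rintro x (⟨y, hy, rfl⟩ | ⟨y, hy, rfl⟩) <;>
      obtain ⟨h0, h1⟩ := ih hy <;> constructor <;> nlinarith

lemma selfSimilar :
    cantorSet = (fun x : ℝ => x / 3) '' cantorSet ∪ (fun x : ℝ => x / 3 + 2 / 3) '' cantorSet := by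
  ext x
  constructor
  · intro hx
    have hx1 : x ∈ preCantorSet 1 := Set.mem_iInter.mp hx 1
    have hmem : ∀ n, x ∈ preCantorSet (n + 1) := fun n => Set.mem_iInter.mp hx (n + 1)
    rcases hx1 with ⟨y, hy, rfl⟩ | ⟨y, hy, rfl⟩
    · -- x = y/3 with y ∈ [0,1], so x ≤ 1/3
      obtain ⟨hy0, hy1⟩ : y ∈ Set.Icc (0:ℝ) 1 := by simpa using hy
      left
      refine ⟨y, ?_, rfl⟩
      refine Set.mem_iInter.mpr fun n => ?_
      rcases hmem n with ⟨z, hz, hzx⟩ | ⟨z, hz, hzx⟩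
      · have : z = y := by dsimp at hzx; linarith
        rwa [← this]
      · obtain ⟨hz0, _⟩ := preCantorSet_subset_unit n hz
        dsimp at hzx; linarith
    · -- x = (2+y)/3, x ≥ 2/3
      obtain ⟨hy0, hy1⟩ : y ∈ Set.Icc (0:ℝ) 1 := by simpa using hy
      right
      refine ⟨y, ?_, by ring⟩
      refine Set.mem_iInter.mpr fun n => ?_
      rcases hmem n with ⟨z, hz, hzx⟩ | ⟨z, hz, hzx⟩
      · obtain ⟨_, hz1⟩ := preCantorSet_subset_unit n hz
        dsimp at hzx; linarith
      · have : z = y := by dsimp at hzx; linarith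
        rwa [← this]
  · rintro (⟨y, hy, rfl⟩ | ⟨y, hy, rfl⟩) <;> refine Set.mem_iInter.mpr fun n => ?_
    · cases n with
      | zero =>
        obtain ⟨h0, h1⟩ := cantorSet_subset_unitInterval hy
        constructor <;> dsimp <;> linarith
      | succ n => exact Or.inl ⟨y, Set.mem_iInter.mp hy n, rfl⟩
    · cases n with
      | zero =>
        obtain ⟨h0, h1⟩ := cantorSet_subset_unitInterval hy
        constructor <;> dsimp <;> linarith
      | succ n => exact Or.inr ⟨y, Set.mem_iInter.mp hy n, by dsimp; ring⟩

/-- The Cantor ternary set is the unique nonempty compact set `K ⊆ ℝ` with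
`K = ω₀(K) ∪ ω₁(K)`, where `ω₀(x) = x/3` and `ω₁(x) = x/3 + 2/3`. -/
theorem cantorSet_unique_attractor :
    cantorSet.Nonempty ∧ IsCompact cantorSet ∧
    cantorSet = (fun x : ℝ => x / 3) '' cantorSet ∪ (fun x : ℝ => x / 3 + 2 / 3) '' cantorSet ∧
    ∀ K : Set ℝ, K.Nonempty → IsCompact K →
      K = (fun x : ℝ => x / 3) '' K ∪ (fun x : ℝ => x / 3 + 2 / 3) '' K →
      K = cantorSet := by
  refine ⟨⟨0, zero_mem_cantorSet⟩, isCompact_cantorSet, selfSimilar, ?_⟩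
  intro K hne hK hFK
  -- K ⊆ [0,1]
  have hsub : K ⊆ Set.Icc (0:ℝ) 1 := by
    have hM : sSup K ∈ K := hK.sSup_mem hne
    have hm : sInf K ∈ K := hK.sInf_mem hne
    have hbddA := hK.bddAbove
    have hbddB := hK.bddBelow
    have hMle : sSup K ≤ 1 := by
      have hM2 : sSup K ∈ (fun x : ℝ => x / 3) '' K ∪ (fun x : ℝ => x / 3 + 2 / 3) '' K := by
        rw [← hFK]; exact hM
      rcases hM2 with ⟨y, hy, hyx⟩ | ⟨y, hy, hyx⟩ <;>
        have := le_csSup hbddA hy <;> dsimp at hyx <;> linarith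
    have hmge : (0:ℝ) ≤ sInf K := by
      have hm2 : sInf K ∈ (fun x : ℝ => x / 3) '' K ∪ (fun x : ℝ => x / 3 + 2 / 3) '' K := by
        rw [← hFK]; exact hm
      rcases hm2 with ⟨y, hy, hyx⟩ | ⟨y, hy, hyx⟩ <;>
        have := csInf_le hbddB hy <;> dsimp at hyx <;> linarith
    intro x hx
    exact ⟨hmge.trans (csInf_le hbddB hx), (le_csSup hbddA hx).trans hMle⟩
  -- K ⊆ cantorSet
  have hKC : K ⊆ cantorSet := by
    have h : ∀ n, K ⊆ preCantorSet n := by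
      intro n
      induction n with
      | zero => exact hsub
      | succ n ih =>
        rw [hFK]
        rintro x (⟨y, hy, rfl⟩ | ⟨y, hy, rfl⟩)
        · exact Or.inl ⟨y, ih hy, rfl⟩
        · exact Or.inr ⟨y, ih hy, by dsimp; ring⟩
    exact fun x hx => Set.mem_iInter.mpr fun n => h n hx
  -- cantorSet ⊆ K
  have hf0 : ∀ y ∈ K, y / 3 ∈ K := fun y hy => by
    rw [hFK]; exact Or.inl ⟨y, hy, rfl⟩
  have hf1 : ∀ y ∈ K, y / 3 + 2 / 3 ∈ K := fun y hy => by
    rw [hFK]; exact Or.inr ⟨y, hy, rfl⟩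
  obtain ⟨p, hp⟩ := hne
  have key : ∀ n, ∀ x ∈ preCantorSet n, ∃ k ∈ K, |x - k| ≤ (1/3 : ℝ) ^ n := by
    intro n
    induction n with
    | zero =>
      intro x hx
      obtain ⟨hx0, hx1⟩ := hx
      obtain ⟨hp0, hp1⟩ := hsub hp
      exact ⟨p, hp, by rw [abs_le]; constructor <;> simp <;> linarith⟩
    | succ n ih =>
      rintro x (⟨y, hy, rfl⟩ | ⟨y, hy, rfl⟩)
      · obtain ⟨k, hk, hdk⟩ := ih y hy
        refine ⟨k / 3, hf0 k hk, ?_⟩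
        have : (y:ℝ)/3 - k/3 = (y - k)/3 := by ring
        rw [this, abs_div, abs_of_pos (by norm_num : (0:ℝ) < 3)]
        rw [pow_succ]
        linarith
      · obtain ⟨k, hk, hdk⟩ := ih y hy
        refine ⟨k / 3 + 2 / 3, hf1 k hk, ?_⟩
        have : (2 + y)/3 - (k/3 + 2/3) = (y - k)/3 := by ring
        rw [this, abs_div, abs_of_pos (by norm_num : (0:ℝ) < 3)]
        rw [pow_succ]
        linarith
  have hCK : cantorSet ⊆ K := by
    intro x hx
    have hcl : IsClosed K := hK.isClosed
    rw [← hcl.closure_eq]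
    rw [Metric.mem_closure_iff]
    intro ε hε
    obtain ⟨n, hn⟩ := exists_pow_lt_of_lt_one hε (by norm_num : (1/3 : ℝ) < 1)
    obtain ⟨k, hk, hdk⟩ := key n x (Set.mem_iInter.mp hx n)
    exact ⟨k, hk, lt_of_le_of_lt (by simpa [Real.dist_eq] using hdk) hn⟩
  exact Set.Subset.antisymm hKC hCK
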